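/- arXiv:1911.02841 — 3 statements merged into one kernel-verified Lean document; each statement's English description precedes it below -/
import Mathlib

section
/- Let 0<q<1, α>-1, t∈ℂ, and x a nonzero real number. Then applying the generalized q-differential operator ∂_{q,α} to the function u ↦ sin_α((1-q)ut;q²) at the point x gives ∂_{q,α}[sin_α((1-q)·t;q²)](x) = t·cos_α((1-q)xt;q²). -/
noncomputable section

open Complex Filter Topology

/-- Finite q-Pochhammer symbol (a;q)ₖ over ℂ. -/
def qPoch (a q : ℂ) (k : ℕ) : ℂ := ∏ j ∈ Finset.range k, (1 - a * q ^ j)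

/-- Finite q-Pochhammer symbol (a;q)ₖ over ℝ. -/
def qPochR (a q : ℝ) (k : ℕ) : ℝ := ∏ j ∈ Finset.range k, (1 - a * q ^ j)

/-- Infinite q-Pochhammer symbol (a;q)_∞ over ℝ. -/
def qPochInf (a q : ℝ) : ℝ := ∏' k : ℕ, (1 - a * q ^ k)

/-- k-th term of the generalized q²-cosine series cos_α(x;q²). -/
def qCosTerm (q α : ℝ) (x : ℂ) (k : ℕ) : ℂ :=
  (-1) ^ k * (q : ℂ) ^ (k * (k + 1)) * x ^ (2 * k) /
    (qPoch ((q ^ (2 * α + 2 : ℝ) : ℝ) : ℂ) ((q : ℂ) ^ 2) k *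
      qPoch ((q : ℂ) ^ 2) ((q : ℂ) ^ 2) k)

/-- Generalized q²-cosine cos_α(x;q²). -/
def qCos (q α : ℝ) (x : ℂ) : ℂ := ∑' k : ℕ, qCosTerm q α x k

/-- k-th term of the generalized q²-sine series sin_α(x;q²). -/
def qSinTerm (q α : ℝ) (x : ℂ) (k : ℕ) : ℂ :=
  (-1) ^ k * (q : ℂ) ^ (k * (k + 1)) * x ^ (2 * k + 1) /
    (qPoch ((q ^ (2 * α + 2 : ℝ) : ℝ) : ℂ) ((q : ℂ) ^ 2) (k + 1) *
      qPoch ((q : ℂ) ^ 2) ((q : ℂ) ^ 2) k)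

/-- Generalized q²-sine sin_α(x;q²). -/
def qSin (q α : ℝ) (x : ℂ) : ℂ := ∑' k : ℕ, qSinTerm q α x k

/-- Generalized q²-exponential e_α(x;q²) = cos_α(-ix;q²) + i·sin_α(-ix;q²). -/
def qExp (q α : ℝ) (x : ℂ) : ℂ :=
  qCos q α (-Complex.I * x) + Complex.I * qSin q α (-Complex.I * x)

/-- The constant C_{α,q} = (1-q)^α (q^{2α+2};q²)_∞ / (2 (q²;q²)_∞). -/
def Cconst (q α : ℝ) : ℝ :=
  (1 - q) ^ α * qPochInf (q ^ (2 * α + 2 : ℝ)) (q ^ 2) / (2 * qPochInf (q ^ 2) (q ^ 2))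

/-- Bilateral q-Jackson integral ∫_{-∞}^∞ F(x) d_q x, for a ℂ-valued integrand. -/
def jacksonBi (q : ℝ) (F : ℝ → ℂ) : ℂ :=
  ((1 - q : ℝ) : ℂ) * ∑' n : ℤ, (q : ℂ) ^ n * (F (q ^ n) + F (-(q ^ n)))

/-- Bilateral q-Jackson integral ∫_{-∞}^∞ F(x) d_q x, for an ℝ-valued integrand. -/
def jacksonBiR (q : ℝ) (F : ℝ → ℝ) : ℝ :=
  (1 - q) * ∑' n : ℤ, q ^ n * (F (q ^ n) + F (-(q ^ n)))

/-- Generalized q²-Fourier transform f̂(x;q²). -/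
def qFourier (q α : ℝ) (f : ℝ → ℂ) (x : ℝ) : ℂ :=
  (Cconst q α : ℂ) * jacksonBi q (fun t =>
    f t * qExp q α (-Complex.I * (((1 - q) * t * x : ℝ) : ℂ)) * ((|t| ^ (2 * α + 1) : ℝ) : ℂ))

/-- Generalized q-differential operator ∂_{q,α} (for x ≠ 0). -/
def qDeriv (q α : ℝ) (f : ℝ → ℂ) (x : ℝ) : ℂ :=
  (f (q⁻¹ * x) + f (-(q⁻¹ * x)) - ((q ^ (2 * α + 1 : ℝ) : ℝ) : ℂ) * (f x + f (-x))) /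
      (2 * ((1 - q : ℝ) : ℂ) * (x : ℂ)) +
    (f x - f (-x) - ((q ^ (2 * α + 1 : ℝ) : ℝ) : ℂ) * (f (q * x) - f (-(q * x)))) /
      (2 * ((1 - q : ℝ) : ℂ) * (x : ℂ))

/-- q-number [x]_q = (1 - q^x)/(1 - q). -/
def qBracket (q x : ℝ) : ℝ := (1 - q ^ x) / (1 - q)

/-- Generalized q-factorial [m]_{q,α}! = ∏_{j=1}^m [j]_{q,α}, where
[2n]_{q,α} = [2n+2α+1]_q and [2n+1]_{q,α} = [2n+2α+2]_q (both equal [j+2α+1]_q for j = 2n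
resp. j = 2n+1). -/
def qFactG (q α : ℝ) (m : ℕ) : ℝ :=
  ∏ j ∈ Finset.range m, qBracket q ((j : ℝ) + 1 + 2 * α + 1)

/-- Generalized q-shifted factorial (q;q)_{m,α} = (1-q)^m [m]_{q,α}!. -/
def qShiftG (q α : ℝ) (m : ℕ) : ℝ := (1 - q) ^ m * qFactG q α m

/-- q-Gamma function Γ_q(z) = ((q;q)_∞/(q^z;q)_∞)(1-q)^{1-z}. -/
def qGammaF (q z : ℝ) : ℝ := qPochInf q q / qPochInf (q ^ z) q * (1 - q) ^ (1 - z)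

/-! Since `sin_α` is odd, the even part of `∂_{q,α}` vanishes and the operator reduces to
`(f x - q^(2α+1) f (q x)) / ((1 - q) x)`. On the `k`-th term of the sine series, `z ↦ q z`
multiplies by `q^(2k+1)`, so this combination produces the factor `1 - q^(2α+2) q^(2k)`: exactly
the last factor of `(q^(2α+2); q²)_{k+1}` in its denominator. Cancelling it leaves `z` times the
`k`-th cosine term, and the Gaussian decay `q^(k(k+1))` of both series justifies working termwise. -/

theorem summable_of_norm_le_pow_of_tendsto_zero {E : Type*} [NormedAddCommGroup E]
    [CompleteSpace E] {f : ℕ → E} {r : ℕ → ℝ} (hr : Tendsto r atTop (𝓝 0))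
    (hf : ∀ k, ‖f k‖ ≤ r k ^ k) : Summable f := by
  refine .of_norm_bounded_eventually_nat summable_geometric_two ?_
  have hsmall : ∀ᶠ k in atTop, |r k| ≤ 1 / 2 := by
    simpa using hr.abs.eventually (ge_mem_nhds (by norm_num : |(0 : ℝ)| < 1 / 2))
  filter_upwards [hsmall] with k hk
  calc ‖f k‖ ≤ r k ^ k := hf k
    _ ≤ |r k| ^ k := (le_abs_self _).trans (abs_pow _ _).le
    _ ≤ (1 / 2) ^ k := pow_le_pow_left₀ (abs_nonneg _) hk k

section Pochhammer

variable {a Q : ℝ}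

theorem one_sub_le_one_sub_mul_pow (ha0 : 0 ≤ a) (hQ0 : 0 ≤ Q) (hQ1 : Q ≤ 1) (j : ℕ) :
    1 - a ≤ 1 - a * Q ^ j := by
  nlinarith [pow_le_one₀ hQ0 hQ1 (n := j)]

theorem one_sub_mul_pow_pos (ha0 : 0 ≤ a) (ha1 : a < 1) (hQ0 : 0 ≤ Q) (hQ1 : Q ≤ 1) (j : ℕ) :
    0 < 1 - a * Q ^ j :=
  (sub_pos.2 ha1).trans_le (one_sub_le_one_sub_mul_pow ha0 hQ0 hQ1 j)

theorem qPochR_pos (ha0 : 0 ≤ a) (ha1 : a < 1) (hQ0 : 0 ≤ Q) (hQ1 : Q ≤ 1) (k : ℕ) :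
    0 < qPochR a Q k :=
  Finset.prod_pos fun j _ => one_sub_mul_pow_pos ha0 ha1 hQ0 hQ1 j

theorem one_sub_pow_le_qPochR (ha0 : 0 ≤ a) (ha1 : a < 1) (hQ0 : 0 ≤ Q) (hQ1 : Q ≤ 1) (k : ℕ) :
    (1 - a) ^ k ≤ qPochR a Q k := by
  calc (1 - a) ^ k = ∏ _j ∈ Finset.range k, (1 - a) := by simp
    _ ≤ qPochR a Q k := Finset.prod_le_prod (fun _ _ => by linarith) fun j _ =>
        one_sub_le_one_sub_mul_pow ha0 hQ0 hQ1 j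

theorem qPoch_ofReal (a Q : ℝ) (k : ℕ) : qPoch (a : ℂ) (Q : ℂ) k = (qPochR a Q k : ℂ) := by
  simp [qPoch, qPochR]

theorem norm_qPoch_ofReal (ha0 : 0 ≤ a) (ha1 : a < 1) (hQ0 : 0 ≤ Q) (hQ1 : Q ≤ 1) (k : ℕ) :
    ‖qPoch (a : ℂ) (Q : ℂ) k‖ = qPochR a Q k := by
  rw [qPoch_ofReal, Complex.norm_real, Real.norm_of_nonneg (qPochR_pos ha0 ha1 hQ0 hQ1 k).le]

end Pochhammer

-- When the last factor vanishes, both sides are `0` (`x / 0 = 0`).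
theorem qSinTerm_eq_div (q α : ℝ) (z : ℂ) (k : ℕ) :
    qSinTerm q α z k =
      z * qCosTerm q α z k / (1 - ((q ^ (2 * α + 2 : ℝ) : ℝ) : ℂ) * ((q : ℂ) ^ 2) ^ k) := by
  rw [qSinTerm, qCosTerm, qPoch, Finset.prod_range_succ, ← qPoch, mul_right_comm _ (1 - _),
    ← div_div]
  ring

theorem qSinTerm_mul_left (q α : ℝ) (z : ℂ) (k : ℕ) :
    qSinTerm q α ((q : ℂ) * z) k = (q : ℂ) ^ (2 * k + 1) * qSinTerm q α z k := by
  rw [qSinTerm, qSinTerm, mul_pow]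
  ring

theorem qSin_neg (q α : ℝ) (z : ℂ) : qSin q α (-z) = -qSin q α z := by
  rw [qSin, qSin, ← tsum_neg]
  refine tsum_congr fun k => ?_
  rw [qSinTerm, qSinTerm, Odd.neg_pow ⟨k, by ring⟩ z]
  ring

section qTrig

variable {q α : ℝ}

theorem norm_qCosTerm_le (hq0 : 0 < q) (hq1 : q < 1) (hα : -1 < α) (z : ℂ) (k : ℕ) :
    ‖qCosTerm q α z k‖ ≤
      (q ^ (k + 1) * (‖z‖ ^ 2 / ((1 - q ^ (2 * α + 2 : ℝ)) * (1 - q ^ 2)))) ^ k := by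
  rw [qCosTerm, ← Complex.ofReal_pow q 2]
  set a := q ^ (2 * α + 2 : ℝ)
  have ha0 : 0 ≤ a := (Real.rpow_pos_of_pos hq0 _).le
  have ha1 : a < 1 := Real.rpow_lt_one hq0.le hq1 (by linarith)
  have hQ0 : 0 ≤ q ^ 2 := by positivity
  have hQ1 : q ^ 2 ≤ 1 := pow_le_one₀ hq0.le hq1.le
  have hQ1' : q ^ 2 < 1 := pow_lt_one₀ hq0.le hq1 two_ne_zero
  have hden : ((1 - a) * (1 - q ^ 2)) ^ k ≤ qPochR a (q ^ 2) k * qPochR (q ^ 2) (q ^ 2) k := by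
    rw [mul_pow]
    exact mul_le_mul (one_sub_pow_le_qPochR ha0 ha1 hQ0 hQ1 k)
      (one_sub_pow_le_qPochR hQ0 hQ1' hQ0 hQ1 k) (by positivity) (qPochR_pos ha0 ha1 hQ0 hQ1 k).le
  have h1a : 0 < 1 - a := by linarith
  have h1q : 0 < 1 - q ^ 2 := by linarith
  have hden_pos : 0 < ((1 - a) * (1 - q ^ 2)) ^ k := by positivity
  simp only [norm_div, norm_mul, norm_pow, norm_neg, norm_one, one_pow, one_mul,
    Complex.norm_real, Real.norm_of_nonneg hq0.le, norm_qPoch_ofReal ha0 ha1 hQ0 hQ1,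
    norm_qPoch_ofReal hQ0 hQ1' hQ0 hQ1]
  calc q ^ (k * (k + 1)) * ‖z‖ ^ (2 * k) / (qPochR a (q ^ 2) k * qPochR (q ^ 2) (q ^ 2) k)
    _ ≤ q ^ (k * (k + 1)) * ‖z‖ ^ (2 * k) / ((1 - a) * (1 - q ^ 2)) ^ k :=
        div_le_div_of_nonneg_left (by positivity) hden_pos hden
    _ = _ := by simp only [mul_pow, div_pow, ← pow_mul]; ring

theorem summable_qCosTerm (hq0 : 0 < q) (hq1 : q < 1) (hα : -1 < α) (z : ℂ) :
    Summable (qCosTerm q α z) := by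
  refine summable_of_norm_le_pow_of_tendsto_zero ?_ (norm_qCosTerm_le hq0 hq1 hα z)
  simpa using ((tendsto_pow_atTop_nhds_zero_of_lt_one hq0.le hq1).comp
    (tendsto_add_atTop_nat 1)).mul_const _

theorem one_sub_rpow_le_norm_one_sub_rpow_mul_pow (hq0 : 0 < q) (hq1 : q < 1) (k : ℕ) :
    1 - q ^ (2 * α + 2 : ℝ) ≤ ‖1 - ((q ^ (2 * α + 2 : ℝ) : ℝ) : ℂ) * ((q : ℂ) ^ 2) ^ k‖ := by
  have ha0 : 0 ≤ q ^ (2 * α + 2 : ℝ) := (Real.rpow_pos_of_pos hq0 _).le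
  have hQ0 : 0 ≤ q ^ 2 := by positivity
  have hQ1 : q ^ 2 ≤ 1 := pow_le_one₀ hq0.le hq1.le
  rw [← Complex.ofReal_pow q 2, ← Complex.ofReal_pow, ← Complex.ofReal_mul, ← Complex.ofReal_one,
    ← Complex.ofReal_sub, Complex.norm_real]
  exact (one_sub_le_one_sub_mul_pow ha0 hQ0 hQ1 k).trans (le_abs_self _)

theorem summable_qSinTerm (hq0 : 0 < q) (hq1 : q < 1) (hα : -1 < α) (z : ℂ) :
    Summable (qSinTerm q α z) := by
  have h1a : 0 < 1 - q ^ (2 * α + 2 : ℝ) := sub_pos.2 (Real.rpow_lt_one hq0.le hq1 (by linarith))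
  refine .of_norm_bounded
    ((summable_qCosTerm hq0 hq1 hα z).norm.mul_left (‖z‖ / (1 - q ^ (2 * α + 2 : ℝ)))) fun k => ?_
  rw [qSinTerm_eq_div, norm_div, norm_mul]
  calc ‖z‖ * ‖qCosTerm q α z k‖ / ‖1 - ((q ^ (2 * α + 2 : ℝ) : ℝ) : ℂ) * ((q : ℂ) ^ 2) ^ k‖
      ≤ ‖z‖ * ‖qCosTerm q α z k‖ / (1 - q ^ (2 * α + 2 : ℝ)) :=
        div_le_div_of_nonneg_left (by positivity) h1a
          (one_sub_rpow_le_norm_one_sub_rpow_mul_pow hq0 hq1 k)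
    _ = ‖z‖ / (1 - q ^ (2 * α + 2 : ℝ)) * ‖qCosTerm q α z k‖ := by ring

theorem qSinTerm_sub_rpow_mul_qSinTerm_mul_left (hq0 : 0 < q) (hq1 : q < 1) (hα : -1 < α)
    (z : ℂ) (k : ℕ) :
    qSinTerm q α z k - ((q ^ (2 * α + 1 : ℝ) : ℝ) : ℂ) * qSinTerm q α ((q : ℂ) * z) k =
      z * qCosTerm q α z k := by
  have hpow : q ^ (2 * α + 1 : ℝ) * q ^ (2 * k + 1) = q ^ (2 * α + 2 : ℝ) * (q ^ 2) ^ k := by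
    rw [← pow_mul, ← Real.rpow_natCast, ← Real.rpow_natCast, ← Real.rpow_add hq0,
      ← Real.rpow_add hq0]
    push_cast
    ring_nf
  have hne : 1 - ((q ^ (2 * α + 2 : ℝ) : ℝ) : ℂ) * ((q : ℂ) ^ 2) ^ k ≠ 0 := by
    refine norm_pos_iff.1 (lt_of_lt_of_le ?_ (one_sub_rpow_le_norm_one_sub_rpow_mul_pow hq0 hq1 k))
    exact sub_pos.2 (Real.rpow_lt_one hq0.le hq1 (by linarith))
  calc qSinTerm q α z k - ((q ^ (2 * α + 1 : ℝ) : ℝ) : ℂ) * qSinTerm q α ((q : ℂ) * z) k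
      = (1 - ((q ^ (2 * α + 1 : ℝ) * q ^ (2 * k + 1) : ℝ) : ℂ)) * qSinTerm q α z k := by
        rw [qSinTerm_mul_left]; push_cast; ring
    _ = (1 - ((q ^ (2 * α + 2 : ℝ) : ℝ) : ℂ) * ((q : ℂ) ^ 2) ^ k) *
          (z * qCosTerm q α z k / (1 - ((q ^ (2 * α + 2 : ℝ) : ℝ) : ℂ) * ((q : ℂ) ^ 2) ^ k)) := by
        rw [hpow, ← qSinTerm_eq_div]; push_cast; ring
    _ = z * qCosTerm q α z k := mul_div_cancel₀ _ hne

theorem qSin_sub_rpow_mul_qSin_mul_left (hq0 : 0 < q) (hq1 : q < 1) (hα : -1 < α) (z : ℂ) :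
    qSin q α z - ((q ^ (2 * α + 1 : ℝ) : ℝ) : ℂ) * qSin q α ((q : ℂ) * z) = z * qCos q α z := by
  rw [qSin, qSin, qCos, ← tsum_mul_left, ← tsum_mul_left,
    ← (summable_qSinTerm hq0 hq1 hα z).tsum_sub ((summable_qSinTerm hq0 hq1 hα _).mul_left _)]
  exact tsum_congr (qSinTerm_sub_rpow_mul_qSinTerm_mul_left hq0 hq1 hα z)

end qTrig

theorem qDeriv_of_odd (q α : ℝ) {f : ℝ → ℂ} (hf : ∀ u, f (-u) = -f u) (x : ℝ) :
    qDeriv q α f x =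
      (f x - ((q ^ (2 * α + 1 : ℝ) : ℝ) : ℂ) * f (q * x)) / (((1 - q) * x : ℝ) : ℂ) := by
  simp only [qDeriv, hf, Complex.ofReal_mul]
  ring

/-- ∂_{q,α} sin_α((1-q)xt;q²) = t cos_α((1-q)xt;q²). -/
theorem qDeriv_qSin (q α : ℝ) (hq0 : 0 < q) (hq1 : q < 1) (hα : -1 < α) (t : ℂ) (x : ℝ)
    (hx : x ≠ 0) :
    qDeriv q α (fun u => qSin q α ((((1 - q) * u : ℝ) : ℂ) * t)) x =
      t * qCos q α ((((1 - q) * x : ℝ) : ℂ) * t) := by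
  have hodd (u : ℝ) : qSin q α ((((1 - q) * -u : ℝ) : ℂ) * t) =
      -qSin q α ((((1 - q) * u : ℝ) : ℂ) * t) := by
    rw [← qSin_neg]
    push_cast
    ring_nf
  have hqx : (((1 - q) * (q * x) : ℝ) : ℂ) * t = (q : ℂ) * ((((1 - q) * x : ℝ) : ℂ) * t) := by
    push_cast
    ring
  have hc : (((1 - q) * x : ℝ) : ℂ) ≠ 0 := by
    exact_mod_cast mul_ne_zero (sub_ne_zero.2 hq1.ne') hx
  rw [qDeriv_of_odd q α hodd, hqx, qSin_sub_rpow_mul_qSin_mul_left hq0 hq1 hα, mul_assoc,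
    mul_div_cancel_left₀ _ hc]
end
end

section
/- Let α>-1 and x∈ℂ be fixed. Then as q tends to 1 from below, sin_α((1-q)x;q²) tends to (x/(2(α+1)))·₀F₁(—;α+2;-x²/4) = (x/(2(α+1))) Σ_{k=0}^∞ (-x²/4)^k / (k! (α+2)_k), where (α+2)_k = (α+2)(α+3)⋯(α+k+1) is the Pochhammer symbol. -/
noncomputable section

open Complex Filter Topology

/-!
Substituting `(1 - q) x`, the `k`-th term of `sin_α` becomes `(-1)^k x^(2k+1) q^(k(k+1))` times a
product of reciprocal `q`-numbers `1/[s]_q = (1 - q)/(1 - q^s)`, over `s = 2α+2+2j` (`j ≤ k`) and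
`s = 2+2j` (`j < k`). Since `[s]_q → s` as `q → 1`, each term tends to the corresponding term of the
`₀F₁` series. The elementary bound `1/[s]_q ≤ 1/s + (1 - q)` dominates all terms, uniformly for `q`
near `1`, by a series that converges by the ratio test, so Tannery's theorem lets the limit pass
through the sum.
-/

open Real Finset

lemma summable_of_le_mul_of_tendsto {f c : ℕ → ℝ} {l : ℝ} (hl : l < 1) (hf : ∀ n, 0 ≤ f n)
    (hfc : ∀ n, f (n + 1) ≤ c n * f n) (hc : Tendsto c atTop (𝓝 l)) : Summable f := by
  obtain ⟨r, hlr, hr1⟩ := exists_between hl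
  refine summable_of_ratio_norm_eventually_le hr1 ?_
  filter_upwards [hc.eventually_lt_const hlr] with n hn
  rw [norm_of_nonneg (hf _), norm_of_nonneg (hf _)]
  exact (hfc n).trans (mul_le_mul_of_nonneg_right hn.le (hf n))

lemma qBracket_pos {q s : ℝ} (hq0 : 0 < q) (hq1 : q < 1) (hs : 0 < s) : 0 < qBracket q s :=
  div_pos (sub_pos.2 (rpow_lt_one hq0.le hq1 hs)) (sub_pos.2 hq1)

lemma tendsto_qBracket (s : ℝ) : Tendsto (qBracket · s) (𝓝[≠] 1) (𝓝 s) := by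
  have hd : HasDerivAt (· ^ s) s (1 : ℝ) := by
    simpa using hasDerivAt_rpow_const (x := (1 : ℝ)) (p := s) (Or.inl one_ne_zero)
  refine (hasDerivAt_iff_tendsto_slope.1 hd).congr fun q => ?_
  rw [slope_def_field, one_rpow, qBracket, ← neg_div_neg_eq, neg_sub, neg_sub]

lemma inv_qBracket_le {q s : ℝ} (hq0 : 0 < q) (hq1 : q < 1) (hs : 0 < s) :
    (qBracket q s)⁻¹ ≤ s⁻¹ + (1 - q) := by
  set t := s * (1 - q)
  have ht : 0 < t := mul_pos hs (sub_pos.2 hq1)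
  -- `q ^ s ≤ exp (-t) ≤ 1 / (1 + t)`, hence `1 - q ^ s ≥ t / (1 + t)`
  have hexp : q ^ s ≤ Real.exp (-t) := by
    rw [rpow_def_of_pos hq0, Real.exp_le_exp]
    nlinarith [log_le_sub_one_of_pos hq0]
  have hinv : Real.exp (-t) * (1 + t) ≤ 1 := by
    rw [Real.exp_neg, inv_mul_le_one₀ (Real.exp_pos t)]
    linarith [Real.add_one_le_exp t]
  have hlow : t ≤ (1 - q ^ s) * (1 + t) := by nlinarith
  rw [qBracket, inv_div, div_le_iff₀ (sub_pos.2 (rpow_lt_one hq0.le hq1 hs))]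
  calc 1 - q = s⁻¹ * t := by simp only [t]; field_simp
    _ ≤ s⁻¹ * ((1 - q ^ s) * (1 + t)) := by gcongr
    _ = (s⁻¹ + (1 - q)) * (1 - q ^ s) := by field_simp [t]; ring

lemma prod_inv_qBracket (q : ℝ) (f : ℕ → ℝ) (n : ℕ) :
    ∏ j ∈ range n, (qBracket q (f j))⁻¹ = (1 - q) ^ n / ∏ j ∈ range n, (1 - q ^ f j) := by
  simp only [qBracket, inv_div, prod_div_distrib, prod_const, card_range]

lemma qPoch_ofReal_rpow {q : ℝ} (hq : 0 < q) (s : ℝ) (k : ℕ) :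
    qPoch ((q ^ s : ℝ) : ℂ) ((q : ℂ) ^ 2) k = ((∏ j ∈ range k, (1 - q ^ (s + 2 * j)) : ℝ) : ℂ) := by
  rw [qPoch, Complex.ofReal_prod]
  refine prod_congr rfl fun j _ => ?_
  rw [rpow_add hq, rpow_mul hq.le, rpow_ofNat, rpow_natCast]
  push_cast
  ring

/-- For `g s = 1/[s]_q` and `0 < q < 1` this is
`(1 - q)^(2k+1) / ((q^(2α+2);q²)_(k+1) (q²;q²)_k)`. -/
def sinCoeff (g : ℝ → ℝ) (α : ℝ) (k : ℕ) : ℝ :=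
  (∏ j ∈ range (k + 1), g (2 * α + 2 + 2 * j)) * ∏ j ∈ range k, g (2 + 2 * j)

section sinCoeff

variable {α : ℝ}

lemma sinCoeff_succ (g : ℝ → ℝ) (k : ℕ) :
    sinCoeff g α (k + 1) = g (2 * α + 2 + 2 * (k + 1 : ℕ)) * g (2 + 2 * k) * sinCoeff g α k := by
  rw [sinCoeff, sinCoeff, prod_range_succ _ (k + 1), prod_range_succ (fun j : ℕ => g (2 + 2 * j))]
  ring

lemma sinCoeff_nonneg (hα : -1 < α) {g : ℝ → ℝ} (hg : ∀ s, 0 < s → 0 ≤ g s) (k : ℕ) :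
    0 ≤ sinCoeff g α k :=
  mul_nonneg (prod_nonneg fun j _ => hg _ (by linarith [j.cast_nonneg (α := ℝ)]))
    (prod_nonneg fun j _ => hg _ (by positivity))

lemma sinCoeff_mono (hα : -1 < α) {g h : ℝ → ℝ} (hg : ∀ s, 0 < s → 0 ≤ g s)
    (hgh : ∀ s, 0 < s → g s ≤ h s) (k : ℕ) : sinCoeff g α k ≤ sinCoeff h α k := by
  have hpos : ∀ j : ℕ, 0 < 2 * α + 2 + 2 * j := fun j => by linarith [j.cast_nonneg (α := ℝ)]
  have hpos' : ∀ j : ℕ, 0 < 2 + 2 * (j : ℝ) := fun j => by positivity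
  exact mul_le_mul (prod_le_prod (fun j _ => hg _ (hpos j)) fun j _ => hgh _ (hpos j))
    (prod_le_prod (fun j _ => hg _ (hpos' j)) fun j _ => hgh _ (hpos' j))
    (prod_nonneg fun j _ => hg _ (hpos' j))
    (prod_nonneg fun j _ => (hg _ (hpos j)).trans (hgh _ (hpos j)))

lemma tendsto_sinCoeff (hα : -1 < α) {ι : Type*} {l : Filter ι} {G : ι → ℝ → ℝ} {g : ℝ → ℝ}
    (hG : ∀ s, 0 < s → Tendsto (G · s) l (𝓝 (g s))) (k : ℕ) :
    Tendsto (fun i => sinCoeff (G i) α k) l (𝓝 (sinCoeff g α k)) :=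
  (tendsto_finsetProd _ fun j _ => hG _ (by linarith [j.cast_nonneg (α := ℝ)])).mul
    (tendsto_finsetProd _ fun j _ => hG _ (by positivity))

lemma sinCoeff_inv (k : ℕ) :
    sinCoeff (·⁻¹) α k = (2 * (α + 1) * 4 ^ k * k.factorial * ∏ j ∈ range k, (α + 2 + j))⁻¹ := by
  have h1 : ∏ j ∈ range (k + 1), (2 * α + 2 + 2 * (j : ℝ)) =
      2 * (α + 1) * (2 ^ k * ∏ j ∈ range k, (α + 2 + j)) := by
    simp only [prod_range_succ', Nat.cast_add, Nat.cast_one, Nat.cast_zero,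
      show ∀ j : ℝ, 2 * α + 2 + 2 * (j + 1) = 2 * (α + 2 + j) by intro j; ring,
      prod_mul_distrib, prod_const, card_range]
    ring
  have h2 : ∏ j ∈ range k, (2 + 2 * (j : ℝ)) = 2 ^ k * k.factorial := by
    simp only [show ∀ j : ℝ, 2 + 2 * j = 2 * (j + 1) by intro j; ring, prod_mul_distrib,
      prod_const, card_range, ← prod_range_add_one_eq_factorial, Nat.cast_prod, Nat.cast_add,
      Nat.cast_one]
  simp only [sinCoeff, prod_inv_distrib, h1, h2, ← mul_inv,
    show (4 : ℝ) ^ k = 2 ^ k * 2 ^ k by rw [← mul_pow]; norm_num]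
  ring

lemma summable_pow_mul_sinCoeff_inv_add (hα : -1 < α) {y δ : ℝ} (hy : 0 ≤ y) (hδ : 0 ≤ δ)
    (hyδ : y * δ < 1) :
    Summable fun k => y ^ (2 * k + 1) * sinCoeff (fun s => s⁻¹ + δ) α k := by
  have hg : ∀ s : ℝ, 0 < s → 0 ≤ s⁻¹ + δ := fun s hs => by positivity
  have hnonneg : ∀ k, 0 ≤ y ^ (2 * k + 1) * sinCoeff (fun s => s⁻¹ + δ) α k :=
    fun k => mul_nonneg (by positivity) (sinCoeff_nonneg hα hg k)
  refine summable_of_le_mul_of_tendsto (c := fun n => y ^ 2 * (1 / ((n : ℝ) + 1) + δ) ^ 2)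
    (l := y ^ 2 * δ ^ 2) (by nlinarith [mul_nonneg hy hδ]) hnonneg (fun n => ?_) ?_
  · have hle : ∀ s, (n : ℝ) + 1 ≤ s → s⁻¹ + δ ≤ 1 / ((n : ℝ) + 1) + δ := fun s hs => by
      rw [one_div]; gcongr
    have ha := hle (2 * α + 2 + 2 * (n + 1 : ℕ)) (by push_cast; linarith [n.cast_nonneg (α := ℝ)])
    have hb := hle (2 + 2 * n) (by linarith [n.cast_nonneg (α := ℝ)])
    rw [sinCoeff_succ]
    calc _ = y ^ 2 * ((2 * α + 2 + 2 * (n + 1 : ℕ))⁻¹ + δ) * ((2 + 2 * (n : ℝ))⁻¹ + δ) *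
          (y ^ (2 * n + 1) * sinCoeff (fun s => s⁻¹ + δ) α n) := by ring
      _ ≤ _ := by
        refine mul_le_mul_of_nonneg_right ?_ (hnonneg n)
        rw [mul_assoc, sq (1 / ((n : ℝ) + 1) + δ)]
        exact mul_le_mul_of_nonneg_left (mul_le_mul ha hb (hg _ (by positivity))
          (ha.trans' (hg _ (by push_cast; linarith [n.cast_nonneg (α := ℝ)])))) (sq_nonneg y)
  · simpa using ((tendsto_one_div_add_atTop_nhds_zero_nat.add_const δ).pow 2).const_mul (y ^ 2)

lemma qSinTerm_one_sub_mul {q : ℝ} (hq : 0 < q) (x : ℂ) (k : ℕ) :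
    qSinTerm q α (((1 - q : ℝ) : ℂ) * x) k = (-1) ^ k * x ^ (2 * k + 1) *
      ((q ^ (k * (k + 1)) * sinCoeff (fun s => (qBracket q s)⁻¹) α k : ℝ) : ℂ) := by
  have hsq := qPoch_ofReal_rpow hq 2 k
  rw [rpow_two, Complex.ofReal_pow] at hsq
  rw [qSinTerm, qPoch_ofReal_rpow hq, hsq, sinCoeff,
    prod_inv_qBracket q (fun j : ℕ => 2 * α + 2 + 2 * j),
    prod_inv_qBracket q (fun j : ℕ => 2 + 2 * j), mul_pow]
  push_cast
  ring

lemma norm_qSinTerm_one_sub_mul_le (hα : -1 < α) {q δ : ℝ} (hq0 : 0 < q) (hq1 : q < 1)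
    (hqδ : 1 - q ≤ δ) (x : ℂ) (k : ℕ) :
    ‖qSinTerm q α (((1 - q : ℝ) : ℂ) * x) k‖ ≤
      ‖x‖ ^ (2 * k + 1) * sinCoeff (fun s => s⁻¹ + δ) α k := by
  have hg : ∀ s : ℝ, 0 < s → 0 ≤ (qBracket q s)⁻¹ :=
    fun s hs => inv_nonneg.2 (qBracket_pos hq0 hq1 hs).le
  have hcoeff := sinCoeff_nonneg hα hg k
  rw [qSinTerm_one_sub_mul hq0, norm_mul, norm_mul, norm_pow, norm_neg, norm_one, one_pow, one_mul,
    norm_pow, Complex.norm_real, norm_of_nonneg (mul_nonneg (by positivity) hcoeff)]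
  gcongr
  calc q ^ (k * (k + 1)) * sinCoeff (fun s => (qBracket q s)⁻¹) α k
      ≤ 1 * sinCoeff (fun s => (qBracket q s)⁻¹) α k := by
        gcongr
        exact pow_le_one₀ hq0.le hq1.le
    _ ≤ sinCoeff (fun s => s⁻¹ + δ) α k := by
        rw [one_mul]
        exact sinCoeff_mono hα hg (fun s hs => (inv_qBracket_le hq0 hq1 hs).trans (by linarith)) k

lemma tendsto_qSinTerm_one_sub_mul (hα : -1 < α) (x : ℂ) (k : ℕ) :
    Tendsto (fun q : ℝ => qSinTerm q α (((1 - q : ℝ) : ℂ) * x) k) (𝓝[Set.Ioo 0 1] 1)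
      (𝓝 ((-1) ^ k * x ^ (2 * k + 1) * (sinCoeff (·⁻¹) α k : ℂ))) := by
  have hcoeff : Tendsto (fun q : ℝ => q ^ (k * (k + 1)) * sinCoeff (fun s => (qBracket q s)⁻¹) α k)
      (𝓝[≠] 1) (𝓝 (sinCoeff (·⁻¹) α k)) := by
    simpa using (((continuous_pow _).tendsto 1).mono_left nhdsWithin_le_nhds).mul
      (tendsto_sinCoeff hα (fun s hs => (tendsto_qBracket s).inv₀ hs.ne') k)
  refine (((Complex.continuous_ofReal.tendsto _).comp (hcoeff.mono_left
    (nhdsWithin_mono _ fun q hq => hq.2.ne))).const_mul _).congr' ?_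
  filter_upwards [self_mem_nhdsWithin] with q hq
  exact (qSinTerm_one_sub_mul hq.1 x k).symm

lemma sinCoeff_inv_eq_hypergeom_term (hα : -1 < α) (x : ℂ) (k : ℕ) :
    (-1) ^ k * x ^ (2 * k + 1) * (sinCoeff (·⁻¹) α k : ℂ) = x / (2 * ((α : ℂ) + 1)) *
      ((-x ^ 2 / 4) ^ k / ((k.factorial : ℂ) * ∏ j ∈ range k, ((α : ℂ) + 2 + (j : ℂ)))) := by
  have hα1 : (α : ℂ) + 1 ≠ 0 := by exact_mod_cast (show α + 1 ≠ 0 by linarith)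
  have hprod : ∏ j ∈ range k, ((α : ℂ) + 2 + (j : ℂ)) ≠ 0 :=
    prod_ne_zero_iff.2 fun j _ => by
      exact_mod_cast (show α + 2 + j ≠ 0 by linarith [j.cast_nonneg (α := ℝ)])
  rw [sinCoeff_inv, neg_div, neg_pow (x ^ 2 / 4), div_pow, ← pow_mul]
  push_cast
  field_simp
  ring

end sinCoeff

/-- lim_{q→1⁻} sin_α((1-q)x;q²) = (x/(2(α+1))) ₀F₁(—;α+2;-x²/4). -/
theorem qSin_tendsto_hypergeom (α : ℝ) (hα : -1 < α) (x : ℂ) :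
    Filter.Tendsto (fun q : ℝ => qSin q α (((1 - q : ℝ) : ℂ) * x))
      (nhdsWithin 1 (Set.Ioo 0 1))
      (nhds ((x / (2 * ((α : ℂ) + 1))) * ∑' k : ℕ, (-x ^ 2 / 4) ^ k /
        ((k.factorial : ℂ) * ∏ j ∈ Finset.range k, ((α : ℂ) + 2 + (j : ℂ))))) := by
  set δ := 1 / (‖x‖ + 1)
  have hδ : 0 < δ := by positivity
  have hxδ : ‖x‖ * δ < 1 := by
    rw [mul_one_div, div_lt_one (by positivity)]
    linarith
  rw [← tsum_mul_left, ← tsum_congr (sinCoeff_inv_eq_hypergeom_term hα x)]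
  refine tendsto_tsum_of_dominated_convergence
    (summable_pow_mul_sinCoeff_inv_add hα (norm_nonneg x) hδ.le hxδ)
    (tendsto_qSinTerm_one_sub_mul hα x) ?_
  have hnear : ∀ᶠ q in 𝓝[Set.Ioo 0 1] 1, 1 - δ < q :=
    (eventually_gt_nhds (by linarith)).filter_mono nhdsWithin_le_nhds
  filter_upwards [self_mem_nhdsWithin, hnear] with q hq hqδ k
  exact norm_qSinTerm_one_sub_mul_le hα hq.1 hq.2 (by linarith) x k
end
end

section
/- Let x∈ℂ be fixed. Then as q tends to 1 from below, cos_{-1/2}((1-q)x;q²) tends to cos x, where cos_{-1/2}(y;q²) = Σ_{k=0}^∞ (-1)^k q^{k(k+1)} y^{2k} / ((q;q²)_k (q²;q²)_k). -/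
/-! For `α = -1/2` the two Pochhammer symbols merge into `(q;q)_{2k} = (1-q)^{2k} [2k]_q!`, so the
`k`-th term of `cos_{-1/2}((1-q)x;q²)` is `(-1)^k q^{k(k+1)} x^{2k} / [2k]_q!`, which tends to the
`k`-th Taylor term of `cos x` as `q → 1`. The limit passes through the sum by Tannery's theorem:
with `R = ‖x‖ + 1`, once `q` is close to `1` every `[n]_q` with `n ≥ N` exceeds `R`, hence
`[2k]_q! ≥ R^(2k-N)` and the terms are dominated by `R^N (‖x‖/R)^(2k)`. -/

noncomputable section

open Complex Filter Topology

def qFactorial {R : Type*} [CommSemiring R] (q : R) (n : ℕ) : R :=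
  ∏ m ∈ Finset.range n, ∑ j ∈ Finset.range (m + 1), q ^ j

theorem map_qFactorial {R S : Type*} [CommSemiring R] [CommSemiring S] (f : R →+* S) (q : R)
    (n : ℕ) : f (qFactorial q n) = qFactorial (f q) n := by
  simp [qFactorial, map_prod, map_sum, map_pow]

theorem qFactorial_one {R : Type*} [CommSemiring R] (n : ℕ) :
    qFactorial (1 : R) n = n.factorial := by
  rw [qFactorial, ← Finset.prod_range_add_one_eq_factorial, Nat.cast_prod]
  exact Finset.prod_congr rfl fun m _ => by simp

theorem one_sub_pow_mul_qFactorial {R : Type*} [CommRing R] (q : R) (n : ℕ) :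
    (1 - q) ^ n * qFactorial q n = ∏ m ∈ Finset.range n, (1 - q ^ (m + 1)) := by
  simp only [qFactorial, ← mul_neg_geom_sum, Finset.prod_mul_distrib, Finset.prod_const,
    Finset.card_range]

theorem one_le_geom_sum_succ {q : ℝ} (hq : 0 ≤ q) (m : ℕ) :
    1 ≤ ∑ j ∈ Finset.range (m + 1), q ^ j := by
  simpa using Finset.single_le_sum (fun j _ => pow_nonneg hq j) (Finset.mem_range.2 m.succ_pos)

theorem one_le_qFactorial {q : ℝ} (hq : 0 ≤ q) (n : ℕ) : 1 ≤ qFactorial q n :=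
  Finset.one_le_prod fun m _ => one_le_geom_sum_succ hq m

theorem pow_le_pow_mul_prod {f : ℕ → ℝ} {R : ℝ} {N : ℕ} (hR : 1 ≤ R) (hf : ∀ m, 1 ≤ f m)
    (hfR : ∀ m, N ≤ m → R ≤ f m) (n : ℕ) : R ^ n ≤ R ^ N * ∏ m ∈ Finset.range n, f m := by
  induction n with
  | zero => simpa using one_le_pow₀ hR
  | succ n ih =>
    have hprod : 1 ≤ ∏ m ∈ Finset.range n, f m := Finset.one_le_prod fun m _ => hf m
    rw [Finset.prod_range_succ, ← mul_assoc, pow_succ]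
    by_cases hn : N ≤ n
    · exact mul_le_mul ih (hfR n hn) (by linarith) (by nlinarith [one_le_pow₀ (n := N) hR])
    · calc R ^ n * R = R ^ (n + 1) := (pow_succ R n).symm
        _ ≤ R ^ N := pow_le_pow_right₀ hR (by omega)
        _ ≤ R ^ N * (∏ m ∈ Finset.range n, f m) * f n := by
          rw [mul_assoc]
          exact le_mul_of_one_le_right (by positivity) (one_le_mul_of_one_le_of_one_le hprod (hf n))

theorem pow_le_pow_mul_qFactorial {q R : ℝ} {N : ℕ} (hq : 0 ≤ q) (hR : 1 ≤ R)
    (hN : ∀ n, N ≤ n → R ≤ ∑ j ∈ Finset.range n, q ^ j) (n : ℕ) :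
    R ^ n ≤ R ^ N * qFactorial q n :=
  pow_le_pow_mul_prod hR (one_le_geom_sum_succ hq) (fun m hm => hN _ (by omega)) n

theorem eventually_le_geom_sum (R : ℝ) : ∃ N : ℕ, ∀ᶠ q in 𝓝[Set.Ioo 0 1] (1 : ℝ),
    ∀ n, N ≤ n → R ≤ ∑ j ∈ Finset.range n, q ^ j := by
  obtain ⟨N, hN⟩ := exists_nat_gt R
  have hcont : Continuous fun q : ℝ => ∑ j ∈ Finset.range N, q ^ j := by fun_prop
  have hlt : ∀ᶠ q in 𝓝 (1 : ℝ), R < ∑ j ∈ Finset.range N, q ^ j :=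
    continuousAt_const.eventually_lt hcont.continuousAt (by simpa using hN)
  refine ⟨N, ?_⟩
  filter_upwards [nhdsWithin_le_nhds hlt, self_mem_nhdsWithin] with q hRq hq n hn
  exact hRq.le.trans <| Finset.sum_le_sum_of_subset_of_nonneg (Finset.range_mono hn)
    fun j _ _ => pow_nonneg hq.1.le j

theorem qPoch_mul_qPoch_sq (q : ℂ) (k : ℕ) :
    qPoch q (q ^ 2) k * qPoch (q ^ 2) (q ^ 2) k
      = ∏ m ∈ Finset.range (2 * k), (1 - q ^ (m + 1)) := by
  induction k with
  | zero => simp [qPoch]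
  | succ k ih =>
    simp only [qPoch] at ih ⊢
    rw [Finset.prod_range_succ, Finset.prod_range_succ, Nat.mul_succ, Finset.prod_range_succ,
      Finset.prod_range_succ, ← ih]
    ring

theorem qCosTerm_neg_half {q : ℝ} (hq : q ≠ 1) (x : ℂ) (k : ℕ) :
    qCosTerm q (-(1 / 2)) (((1 - q : ℝ) : ℂ) * x) k
      = (-1) ^ k * (q : ℂ) ^ (k * (k + 1)) * x ^ (2 * k) / qFactorial (q : ℂ) (2 * k) := by
  have h1q : (1 : ℂ) - q ≠ 0 := sub_ne_zero.2 (by exact_mod_cast hq.symm)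
  rw [qCosTerm, show 2 * (-(1 / 2) : ℝ) + 2 = 1 by norm_num, Real.rpow_one, qPoch_mul_qPoch_sq,
    ← one_sub_pow_mul_qFactorial, Complex.ofReal_sub, Complex.ofReal_one, mul_pow,
    mul_left_comm ((-1 : ℂ) ^ k * _), mul_div_mul_left _ _ (pow_ne_zero _ h1q)]

theorem tendsto_qCosTerm_neg_half (x : ℂ) (k : ℕ) :
    Tendsto (fun q : ℝ => qCosTerm q (-(1 / 2)) (((1 - q : ℝ) : ℂ) * x) k)
      (𝓝[Set.Ioo 0 1] 1) (𝓝 ((-1) ^ k * x ^ (2 * k) / (2 * k).factorial)) := by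
  have hcont : ContinuousAt (fun q : ℝ =>
      (-1) ^ k * (q : ℂ) ^ (k * (k + 1)) * x ^ (2 * k) / qFactorial (q : ℂ) (2 * k)) 1 := by
    refine ContinuousAt.div (by fun_prop) (by unfold qFactorial; fun_prop) ?_
    rw [Complex.ofReal_one, qFactorial_one]
    exact_mod_cast (Nat.factorial_pos _).ne'
  have hlim := hcont.tendsto
  simp only [Complex.ofReal_one, one_pow, mul_one, qFactorial_one] at hlim
  refine (tendsto_nhdsWithin_of_tendsto_nhds hlim).congr' ?_
  filter_upwards [self_mem_nhdsWithin] with q hq using (qCosTerm_neg_half hq.2.ne x k).symm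

theorem norm_qCosTerm_neg_half_le {q R : ℝ} {N : ℕ} (hq0 : 0 ≤ q) (hq1 : q < 1) (hR : 1 ≤ R)
    (hN : ∀ n, N ≤ n → R ≤ ∑ j ∈ Finset.range n, q ^ j) (x : ℂ) (k : ℕ) :
    ‖qCosTerm q (-(1 / 2)) (((1 - q : ℝ) : ℂ) * x) k‖ ≤ R ^ N * ((‖x‖ / R) ^ 2) ^ k := by
  have hF : 0 < qFactorial q (2 * k) := zero_lt_one.trans_le (one_le_qFactorial hq0 _)
  have hcast : qFactorial (q : ℂ) (2 * k) = ((qFactorial q (2 * k) : ℝ) : ℂ) :=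
    (map_qFactorial Complex.ofRealHom q (2 * k)).symm
  have hpow : (0 : ℝ) < R ^ (2 * k) := by positivity
  calc ‖qCosTerm q (-(1 / 2)) (((1 - q : ℝ) : ℂ) * x) k‖
      = q ^ (k * (k + 1)) * ‖x‖ ^ (2 * k) / qFactorial q (2 * k) := by
        rw [qCosTerm_neg_half hq1.ne, hcast]
        simp [abs_of_nonneg hq0, abs_of_pos hF]
    _ ≤ ‖x‖ ^ (2 * k) / qFactorial q (2 * k) := by
        gcongr
        exact mul_le_of_le_one_left (by positivity) (pow_le_one₀ hq0 hq1.le)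
    _ ≤ ‖x‖ ^ (2 * k) / R ^ (2 * k) * (R ^ N * qFactorial q (2 * k)) / qFactorial q (2 * k) := by
        gcongr
        rw [div_mul_eq_mul_div, le_div_iff₀ hpow]
        exact mul_le_mul_of_nonneg_left (pow_le_pow_mul_qFactorial hq0 hR hN _) (by positivity)
    _ = R ^ N * ((‖x‖ / R) ^ 2) ^ k := by
        rw [← pow_mul, div_pow]
        field_simp

/-- lim_{q→1⁻} cos_{-1/2}((1-q)x;q²) = cos x. -/
theorem qCos_tendsto_cos (x : ℂ) :
    Filter.Tendsto (fun q : ℝ => qCos q (-(1 / 2)) (((1 - q : ℝ) : ℂ) * x))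
      (nhdsWithin 1 (Set.Ioo 0 1)) (nhds (Complex.cos x)) := by
  set R := ‖x‖ + 1
  have hR : 1 ≤ R := by simp [R]
  have hratio : (‖x‖ / R) ^ 2 < 1 :=
    pow_lt_one₀ (by positivity) ((div_lt_one (by positivity)).2 (by simp [R])) two_ne_zero
  obtain ⟨N, hN⟩ := eventually_le_geom_sum R
  rw [Complex.cos_eq_tsum]
  refine tendsto_tsum_of_dominated_convergence
    ((summable_geometric_of_lt_one (by positivity) hratio).mul_left (R ^ N))
    (tendsto_qCosTerm_neg_half x) ?_
  filter_upwards [hN, self_mem_nhdsWithin] with q hqN hq k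
  exact norm_qCosTerm_neg_half_le hq.1.le hq.2 hR hqN x k
end
end
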